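/- Let G be a connected graph with m ≥ 3 edges. Then ρ_e^o(G) = m − 1 if and only if G is obtained from the star K_{1,m−1} by subdividing exactly one of its edges once. -/

import Mathlib

/-- `e` is a common edge of `e₁` and `e₂` in `G`: `e` is an edge of `G` distinct from
`e₁, e₂` joining an endpoint of `e₁` to an endpoint of `e₂`. -/
def SimpleGraph.IsCommonEdge {V : Type*} (G : SimpleGraph V) (e e₁ e₂ : Sym2 V) : Prop :=
  e ∈ G.edgeSet ∧ e ≠ e₁ ∧ e ≠ e₂ ∧ ∃ a b, e = s(a, b) ∧ a ∈ e₁ ∧ b ∈ e₂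

/-- `D` is an edge open packing set of `G`. -/
def SimpleGraph.IsEOPSet {V : Type*} (G : SimpleGraph V) (D : Set (Sym2 V)) : Prop :=
  D ⊆ G.edgeSet ∧ ∀ e₁ ∈ D, ∀ e₂ ∈ D, e₁ ≠ e₂ → ∀ e, ¬ G.IsCommonEdge e e₁ e₂

/-- The edge open packing number `ρ_e^o(G)`. -/
noncomputable def SimpleGraph.eopNum {V : Type*} (G : SimpleGraph V) : ℕ :=
  sSup {n | ∃ D : Set (Sym2 V), G.IsEOPSet D ∧ D.ncard = n}

/-- `M` is an induced matching of `G`. -/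
def SimpleGraph.IsInducedMatching {V : Type*} (G : SimpleGraph V) (M : Set (Sym2 V)) : Prop :=
  M ⊆ G.edgeSet ∧ (∀ e₁ ∈ M, ∀ e₂ ∈ M, e₁ ≠ e₂ → ∀ v, ¬(v ∈ e₁ ∧ v ∈ e₂)) ∧
    (∀ e₁ ∈ M, ∀ e₂ ∈ M, e₁ ≠ e₂ → ∀ a b, a ∈ e₁ → b ∈ e₂ → ¬ G.Adj a b)

/-- The induced matching number of `G`. -/
noncomputable def SimpleGraph.imNum {V : Type*} (G : SimpleGraph V) : ℕ :=
  sSup {n | ∃ M : Set (Sym2 V), G.IsInducedMatching M ∧ M.ncard = n}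

/-! If `E \ {f}` is an edge open packing of a connected graph, any two of its edges meet: walking
along a path from an end of one to the other, a step along a packing edge lets that edge take over
the role of the first, while a step along `f` followed by any further step makes `f` a common edge
of two packing edges.
Pairwise meeting packing edges contain no triangle, hence form a star at some vertex `c`. Were `c`
an end of `f`, the whole edge set would be a packing; so `f = wu` with `c` adjacent to exactly one
of `w, u`, as `f` would be a common edge of `cw` and `cu`. Conversely, in the subdivided star
`E \ {wu}` is a packing whereas `E` is not: a third edge at `c` and `wu` have the common edge `cw`.
-/

namespace SimpleGraph

variable {V : Type*} {G : SimpleGraph V} {D : Set (Sym2 V)} {e₁ e₂ f : Sym2 V} {a b c : V}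

theorem isEOPSet_empty : G.IsEOPSet ∅ :=
  ⟨Set.empty_subset _, fun _ h => absurd h (Set.notMem_empty _)⟩

theorem bddAbove_ncard_isEOPSet (hfin : G.edgeSet.Finite) :
    BddAbove {n | ∃ D : Set (Sym2 V), G.IsEOPSet D ∧ D.ncard = n} :=
  ⟨G.edgeSet.ncard, by rintro _ ⟨D, hD, rfl⟩; exact Set.ncard_le_ncard hD.1 hfin⟩

theorem IsEOPSet.ncard_le_eopNum (hfin : G.edgeSet.Finite) (hD : G.IsEOPSet D) :
    D.ncard ≤ G.eopNum :=
  le_csSup (bddAbove_ncard_isEOPSet hfin) ⟨D, hD, rfl⟩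

theorem exists_isEOPSet_ncard_eq_eopNum (hfin : G.edgeSet.Finite) :
    ∃ D, G.IsEOPSet D ∧ D.ncard = G.eopNum :=
  Nat.sSup_mem (s := {n | ∃ D : Set (Sym2 V), G.IsEOPSet D ∧ D.ncard = n})
    ⟨0, ∅, isEOPSet_empty, Set.ncard_empty _⟩ (bddAbove_ncard_isEOPSet hfin)

theorem eopNum_eq_ncard_edgeSet_sub_one_iff (hfin : G.edgeSet.Finite)
    (hne : G.edgeSet.Nonempty) :
    G.eopNum = G.edgeSet.ncard - 1 ↔
      ¬ G.IsEOPSet G.edgeSet ∧ ∃ f ∈ G.edgeSet, G.IsEOPSet (G.edgeSet \ {f}) := by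
  have hpos : 0 < G.edgeSet.ncard := (Set.ncard_pos hfin).2 hne
  obtain ⟨D, hD, hDcard⟩ := exists_isEOPSet_ncard_eq_eopNum hfin
  constructor
  · intro h
    refine ⟨fun hE => ?_, ?_⟩
    · have := hE.ncard_le_eopNum hfin
      omega
    · have hcompl : (G.edgeSet \ D).ncard = 1 := by
        rw [Set.ncard_sdiff hD.1 (hfin.subset hD.1)]
        omega
      obtain ⟨f, hf⟩ := Set.ncard_eq_one.1 hcompl
      have hfD : f ∈ G.edgeSet \ D := hf ▸ rfl
      refine ⟨f, hfD.1, ?_⟩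
      rwa [← hf, Set.sdiff_sdiff_cancel_left hD.1]
  · rintro ⟨hE, f, hf, hDf⟩
    refine le_antisymm ?_ ?_
    · have hssub : D ⊂ G.edgeSet := hD.1.ssubset_of_ne fun h => hE (h ▸ hD)
      have := Set.ncard_lt_ncard hssub hfin
      omega
    · rw [← Set.ncard_sdiff_singleton_of_mem hf]
      exact hDf.ncard_le_eopNum hfin

theorem IsEOPSet.not_adj (hD : G.IsEOPSet D) (h₁ : e₁ ∈ D) (h₂ : e₂ ∈ D) (hne : e₁ ≠ e₂)
    (ha : a ∈ e₁) (hb : b ∈ e₂) (hne₁ : s(a, b) ≠ e₁) (hne₂ : s(a, b) ≠ e₂) : ¬ G.Adj a b :=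
  fun hab => hD.2 e₁ h₁ e₂ h₂ hne s(a, b) ⟨hab, hne₁, hne₂, a, b, rfl, ha, hb⟩

theorem IsEOPSet.not_adj_of_mk_mem_of_mk_mem (hD : G.IsEOPSet D) (ha : s(c, a) ∈ D)
    (hb : s(c, b) ∈ D) : ¬ G.Adj a b := by
  intro hab
  have hca : G.Adj c a := hD.1 ha
  have hcb : G.Adj c b := hD.1 hb
  refine hD.not_adj ha hb ?_ (Sym2.mem_mk_right c a) (Sym2.mem_mk_right c b) ?_ ?_ hab
  · rw [Ne, Sym2.congr_right]
    exact hab.ne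
  · rw [Sym2.eq_swap (a := c), Ne, Sym2.congr_right]
    exact hcb.ne'
  · rw [Sym2.eq_swap (a := c), Sym2.eq_swap (a := a), Ne, Sym2.congr_right]
    exact hca.ne'

theorem isEOPSet_of_forall_mem (hDE : D ⊆ G.edgeSet) (hc : ∀ e ∈ D, c ∈ e)
    (hleaves : ∀ a b, s(c, a) ∈ D → s(c, b) ∈ D → ¬ G.Adj a b) : G.IsEOPSet D := by
  refine ⟨hDE, fun e₁ h₁ e₂ h₂ _ e ⟨he, hne₁, hne₂, a, b, hab, ha, hb⟩ => ?_⟩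
  subst hab
  obtain ⟨y₁, rfl⟩ := Sym2.mem_iff_exists.1 (hc _ h₁)
  obtain ⟨y₂, rfl⟩ := Sym2.mem_iff_exists.1 (hc _ h₂)
  have hab : G.Adj a b := he
  rcases Sym2.mem_iff.1 ha with rfl | rfl <;> rcases Sym2.mem_iff.1 hb with rfl | rfl
  · exact hab.ne rfl
  · exact hne₂ rfl
  · exact hne₁ Sym2.eq_swap
  · exact hleaves _ _ h₁ h₂ hab

theorem isEOPSet_edgeSet_of_forall_mem (hc : ∀ e ∈ G.edgeSet, c ∈ e) : G.IsEOPSet G.edgeSet :=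
  isEOPSet_of_forall_mem subset_rfl hc fun a b ha hb hab => by
    rcases Sym2.mem_iff.1 (hc _ hab) with rfl | rfl
    · exact (G.mem_edgeSet.1 ha).ne rfl
    · exact (G.mem_edgeSet.1 hb).ne rfl

theorem IsEOPSet.exists_forall_mem (hD : G.IsEOPSet D)
    (hmeet : ∀ e₁ ∈ D, ∀ e₂ ∈ D, ∃ v ∈ e₁, v ∈ e₂) (h₁ : e₁ ∈ D) (h₂ : e₂ ∈ D)
    (hne : e₁ ≠ e₂) : ∃ c, ∀ e ∈ D, c ∈ e := by
  obtain ⟨c, hc₁, hc₂⟩ := hmeet e₁ h₁ e₂ h₂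
  obtain ⟨a₁, rfl⟩ := Sym2.mem_iff_exists.1 hc₁
  obtain ⟨a₂, rfl⟩ := Sym2.mem_iff_exists.1 hc₂
  refine ⟨c, fun g hg => by_contra fun hcg => ?_⟩
  have hleaf : ∀ a, s(c, a) ∈ D → a ∈ g := fun a ha => by
    obtain ⟨v, hv, hvg⟩ := hmeet _ ha g hg
    rcases Sym2.mem_iff.1 hv with rfl | rfl
    · exact absurd hvg hcg
    · exact hvg
  have ha₁₂ : a₁ ≠ a₂ := fun h => hne (h ▸ rfl)
  have hg_eq : g = s(a₁, a₂) := (Sym2.mem_and_mem_iff ha₁₂).1 ⟨hleaf _ h₁, hleaf _ h₂⟩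
  have hg_adj : s(a₁, a₂) ∈ G.edgeSet := hg_eq ▸ hD.1 hg
  exact hD.not_adj_of_mk_mem_of_mk_mem h₁ h₂ hg_adj

theorem IsEOPSet.mem_or_mem_of_isPath (hD : G.IsEOPSet (G.edgeSet \ {f}))
    (he₂ : e₂ ∈ G.edgeSet \ {f}) {x z : V} (p : G.Walk x z) (hp : p.IsPath) (hz : z ∈ e₂)
    (hxb : s(x, b) ∈ G.edgeSet \ {f}) : x ∈ e₂ ∨ b ∈ e₂ := by
  induction p generalizing b with
  | nil => exact Or.inl hz
  | @cons x v z hxv p ih =>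
    rw [Walk.cons_isPath_iff] at hp
    by_contra! hxb₂
    obtain ⟨hx₂, hb₂⟩ := hxb₂
    have hxb_ne : s(x, b) ≠ e₂ := fun h => hx₂ (h ▸ Sym2.mem_mk_left x b)
    by_cases hv₂ : v ∈ e₂
    · have hvb : s(x, v) ≠ s(x, b) := by
        rw [Ne, Sym2.congr_right]
        rintro rfl
        exact hb₂ hv₂
      exact hD.not_adj hxb he₂ hxb_ne (Sym2.mem_mk_left x b) hv₂ hvb
        (fun h => hx₂ (h ▸ Sym2.mem_mk_left x v)) hxv
    by_cases hxvD : s(x, v) ∈ G.edgeSet \ {f}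
    · rw [Sym2.eq_swap] at hxvD
      exact (ih hp.1 hz hxvD).elim hv₂ hx₂
    have hf : s(x, v) = f := by_contra fun h => hxvD ⟨hxv, h⟩
    cases p with
    | nil => exact hv₂ hz
    | @cons _ w _ hvw q =>
      have hwx : w ≠ x := by
        rintro rfl
        exact hp.2 (List.mem_cons_of_mem v q.start_mem_support)
      have hvwD : s(v, w) ∈ G.edgeSet \ {f} := by
        refine ⟨hvw, fun h => hwx ?_⟩
        rwa [Set.mem_singleton_iff, ← hf, Sym2.eq_swap (a := x), Sym2.congr_right] at h
      have hxb_vw : s(x, b) ≠ s(v, w) := fun h => by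
        rcases Sym2.mem_iff.1 (h ▸ Sym2.mem_mk_left x b) with h | h
        · exact hxv.ne h
        · exact hwx h.symm
      exact hD.not_adj hxb hvwD hxb_vw (Sym2.mem_mk_left x b) (Sym2.mem_mk_left v w)
        (fun h => hxb.2 (h ▸ hf)) (fun h => hvwD.2 (h ▸ hf)) hxv

theorem Connected.exists_mem_mem_of_isEOPSet (hG : G.Connected)
    (hD : G.IsEOPSet (G.edgeSet \ {f})) (h₁ : e₁ ∈ G.edgeSet \ {f})
    (h₂ : e₂ ∈ G.edgeSet \ {f}) : ∃ v ∈ e₁, v ∈ e₂ := by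
  induction e₁ using Sym2.ind with | h x b => ?_
  obtain ⟨p, hp⟩ := (hG.preconnected x e₂.out.1).exists_isPath
  rcases hD.mem_or_mem_of_isPath h₂ p hp (Sym2.out_fst_mem e₂) h₁ with h | h
  · exact ⟨x, Sym2.mem_mk_left x b, h⟩
  · exact ⟨b, Sym2.mem_mk_right x b, h⟩

theorem Connected.exists_adj_mem_of_forall_mem (hG : G.Connected)
    (hc : ∀ e ∈ G.edgeSet, e ≠ f → c ∈ e) (hcf : c ∉ f) : ∃ x ∈ f, G.Adj c x := by
  obtain ⟨p⟩ := hG.preconnected c f.out.1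
  obtain ⟨⟨⟨x, y⟩, hxy⟩, -, hx, hy'⟩ :=
    p.exists_boundary_dart {v | v ∉ f} hcf (not_not.2 (Sym2.out_fst_mem f))
  have hy : y ∈ f := not_not.1 hy'
  rcases Sym2.mem_iff.1 (hc s(x, y) hxy fun h => hx (h ▸ Sym2.mem_mk_left x y)) with rfl | rfl
  · exact ⟨y, hy, hxy⟩
  · exact absurd hy hcf

theorem Connected.exists_subdivided_star (hG : G.Connected) (hf : f ∈ G.edgeSet)
    (hD : G.IsEOPSet (G.edgeSet \ {f})) (hE : ¬ G.IsEOPSet G.edgeSet)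
    (h₁ : e₁ ∈ G.edgeSet \ {f}) (h₂ : e₂ ∈ G.edgeSet \ {f}) (hne : e₁ ≠ e₂) :
    ∃ c w u : V, c ≠ w ∧ w ≠ u ∧ c ≠ u ∧ G.Adj c w ∧ G.Adj w u ∧ ¬ G.Adj c u ∧
      ∀ e ∈ G.edgeSet, e ≠ s(w, u) → c ∈ e := by
  obtain ⟨c, hc⟩ :=
    hD.exists_forall_mem (fun _ h₁ _ h₂ => hG.exists_mem_mem_of_isEOPSet hD h₁ h₂) h₁ h₂ hne
  have hc : ∀ e ∈ G.edgeSet, e ≠ f → c ∈ e := fun e he hef => hc e ⟨he, hef⟩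
  have hcf : c ∉ f := fun hcf => hE <| isEOPSet_edgeSet_of_forall_mem fun e he => by
    by_cases h : e = f
    exacts [h ▸ hcf, hc e he h]
  obtain ⟨w, hwf, hcw⟩ := hG.exists_adj_mem_of_forall_mem hc hcf
  obtain ⟨u, rfl⟩ := Sym2.mem_iff_exists.1 hwf
  have hwu : G.Adj w u := hf
  have hmk : ∀ v, G.Adj c v → s(c, v) ∈ G.edgeSet \ {s(w, u)} :=
    fun v hv => ⟨hv, fun h => hcf (h ▸ Sym2.mem_mk_left c v)⟩
  have hcu : ¬ G.Adj c u := fun hcu => hD.not_adj_of_mk_mem_of_mk_mem (hmk w hcw) (hmk u hcu) hwu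
  exact ⟨c, w, u, hcw.ne, hwu.ne, fun h => hcf (h ▸ Sym2.mem_mk_right w u), hcw, hwu, hcu, hc⟩

theorem isEOPSet_edgeSet_diff_singleton {w u : V} (hcu : ¬ G.Adj c u)
    (hc : ∀ e ∈ G.edgeSet, e ≠ s(w, u) → c ∈ e) : G.IsEOPSet (G.edgeSet \ {s(w, u)}) := by
  refine isEOPSet_of_forall_mem Set.sdiff_subset (fun e he => hc e he.1 he.2)
    fun a b ha hb hab => ?_
  have hca : G.Adj c a := ha.1
  have hcb : G.Adj c b := hb.1
  have hab_eq : s(a, b) = s(w, u) := by_contra fun h => by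
    rcases Sym2.mem_iff.1 (hc _ hab h) with rfl | rfl
    · exact hca.ne rfl
    · exact hcb.ne rfl
  rcases Sym2.eq_iff.1 hab_eq with ⟨-, rfl⟩ | ⟨rfl, -⟩
  · exact hcu hcb
  · exact hcu hca

theorem not_isEOPSet_edgeSet {w u : V} (h3 : 3 ≤ G.edgeSet.ncard)
    (hcw : G.Adj c w) (hwu : G.Adj w u) (hcu : c ≠ u)
    (hc : ∀ e ∈ G.edgeSet, e ≠ s(w, u) → c ∈ e) :
    ¬ G.IsEOPSet G.edgeSet := by
  intro hE
  have hpair : ({s(c, w), s(w, u)} : Set (Sym2 V)).ncard < G.edgeSet.ncard :=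
    (Set.ncard_insert_le _ _).trans_lt (by rw [Set.ncard_singleton]; omega)
  obtain ⟨g, hg, hg'⟩ := Set.exists_mem_notMem_of_ncard_lt_ncard hpair
  simp only [Set.mem_insert_iff, Set.mem_singleton_iff, not_or] at hg'
  refine hE.not_adj hg hwu hg'.2 (hc g hg hg'.2) (Sym2.mem_mk_left w u) (Ne.symm hg'.1) ?_ hcw
  intro h
  rcases Sym2.mem_iff.1 (h ▸ Sym2.mem_mk_left c w) with h | h
  exacts [hcw.ne h, hcu h]

end SimpleGraph

open SimpleGraph in
theorem stmt6 {V : Type*} [Fintype V] (G : SimpleGraph V) (hG : G.Connected)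
    (m : ℕ) (hm : G.edgeSet.ncard = m) (h3 : 3 ≤ m) :
    G.eopNum = m - 1 ↔
      ∃ c w u : V, c ≠ w ∧ w ≠ u ∧ c ≠ u ∧ G.Adj c w ∧ G.Adj w u ∧ ¬ G.Adj c u ∧
        ∀ e ∈ G.edgeSet, e ≠ s(w, u) → c ∈ e := by
  have hfin : G.edgeSet.Finite := G.edgeSet.toFinite
  subst hm
  rw [eopNum_eq_ncard_edgeSet_sub_one_iff hfin (Set.nonempty_of_ncard_ne_zero (by omega))]
  constructor
  · rintro ⟨hE, f, hf, hD⟩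
    have htwo : 1 < (G.edgeSet \ {f}).ncard := by
      rw [Set.ncard_sdiff_singleton_of_mem hf]
      omega
    obtain ⟨e₁, e₂, h₁, h₂, hne⟩ := (Set.one_lt_ncard_iff hfin.sdiff).1 htwo
    exact hG.exists_subdivided_star hf hD hE h₁ h₂ hne
  · rintro ⟨c, w, u, -, -, hcu, hcw, hwu, hcu', hc⟩
    exact ⟨not_isEOPSet_edgeSet h3 hcw hwu hcu hc, s(w, u), hwu,
      isEOPSet_edgeSet_diff_singleton hcu' hc⟩
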